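/- For a single term: if a is odd and α ∈ Z_2^n is a multi-index with α_i = 1, and Q = ∑_{j∈S} x_j is a linear Boolean polynomial not containing x_i, then ord((a/2^b)·x^α [x_i ← ⌈Q⌉]) ≤ ord((a/2^b)·x^α) = b + |α| - 1, using that each summand of the lifting has coefficient a·(±2)^{|S'|-1}/2^b and monomial of degree |α| - 1 + |S'|. -/

import Mathlib

open MvPolynomial

/-- The order of a polynomial over the dyadic rationals: the order of a term
`(a/2^b)·x^α` with `a` odd is `b + |α| - 1`, and the order of a polynomial is the
maximum order over its terms (⊥ for the zero polynomial). -/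
noncomputable def pord {σ : Type*} (P : MvPolynomial σ ℚ) : WithBot ℤ :=
  P.support.sup fun α =>
    ((-(padicValRat 2 (coeff α P)) + (α.sum fun _ e => (e : ℤ)) - 1 : ℤ) : WithBot ℤ)

/-- The lifting `⌈∑_{j∈S} x_j⌉ = ∑_{∅≠S'⊆S} (-2)^(|S'|-1) ∏_{j∈S'} x_j` of a linear
Boolean polynomial to the dyadic rationals. -/
noncomputable def liftLin {σ : Type*} [DecidableEq σ] (S : Finset σ) :
    MvPolynomial σ ℚ :=
  ∑ T ∈ S.powerset.erase ∅, C ((-2 : ℚ) ^ (T.card - 1)) * ∏ j ∈ T, X j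

/-!
Substituting `⌈Q⌉` for `x_i` turns `c·x^α` into `∑_{∅ ≠ T ⊆ S} c·(-2)^(|T|-1)·x^T·x^(α - e_i)`.
The order is ultrametric, because the 2-adic valuation is, so it suffices to bound each
summand; and each summand has exactly the order of `c·x^α`, since passing from `c·x^α` to it
raises the valuation of the coefficient by `|T| - 1` and the degree by `|T| - 1`.
-/

lemma Finsupp.sum_natCast_eq_degree {σ : Type*} (β : σ →₀ ℕ) :
    (β.sum fun _ e => (e : ℤ)) = (β.degree : ℤ) := by
  simp [Finsupp.sum, Finsupp.degree_apply]

lemma Finsupp.degree_eq_one_add_degree_erase {σ : Type*} {β : σ →₀ ℕ} {i : σ} (hβi : β i = 1) :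
    β.degree = 1 + (β.erase i).degree := by
  conv_lhs => rw [← Finsupp.single_add_erase i β, hβi]
  rw [map_add, Finsupp.degree_single]

lemma padicValRat_two_two : padicValRat 2 2 = 1 := by
  simpa using padicValRat.self (p := 2) one_lt_two

lemma Odd.intCast_ne_zero {a : ℤ} (ha : Odd a) : (a : ℚ) ≠ 0 := by
  exact_mod_cast (show a ≠ 0 by rintro rfl; simp at ha)

lemma padicValRat_two_odd_mul_zpow {a : ℤ} (ha : Odd a) (b : ℤ) :
    padicValRat 2 (a * 2 ^ b) = b := by
  rw [padicValRat.mul ha.intCast_ne_zero (by positivity), padicValRat.of_int,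
    padicValInt.eq_zero_of_not_dvd fun h => Int.not_even_iff_odd.2 ha (even_iff_two_dvd.2 h)]
  simp [padicValRat_two_two]

lemma padicValRat_two_neg_two_pow (k : ℕ) : padicValRat 2 ((-2) ^ k) = k := by
  simp [padicValRat.neg, padicValRat_two_two]

section pord

variable {σ : Type*}

lemma le_pord {P : MvPolynomial σ ℚ} {β : σ →₀ ℕ} (hβ : coeff β P ≠ 0) :
    ((-(padicValRat 2 (coeff β P)) + β.degree - 1 : ℤ) : WithBot ℤ) ≤ pord P := by
  rw [← Finsupp.sum_natCast_eq_degree, pord]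
  apply Finset.le_sup (mem_support_iff.2 hβ)

lemma pord_zero : pord (0 : MvPolynomial σ ℚ) = ⊥ := by
  simp [pord]

lemma pord_monomial (β : σ →₀ ℕ) {c : ℚ} (hc : c ≠ 0) :
    pord (monomial β c) = ((-(padicValRat 2 c) + β.degree - 1 : ℤ) : WithBot ℤ) := by
  classical
  rw [pord, support_monomial, if_neg hc, Finset.sup_singleton, coeff_monomial, if_pos rfl,
    Finsupp.sum_natCast_eq_degree]

lemma pord_add_le (P Q : MvPolynomial σ ℚ) : pord (P + Q) ≤ pord P ⊔ pord Q := by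
  refine Finset.sup_le fun γ hγ => ?_
  rw [mem_support_iff, coeff_add] at hγ
  rw [coeff_add, Finsupp.sum_natCast_eq_degree]
  by_cases hP : coeff γ P = 0
  · rw [hP, zero_add] at hγ ⊢
    exact le_sup_of_le_right (le_pord hγ)
  by_cases hQ : coeff γ Q = 0
  · rw [hQ, add_zero] at hγ ⊢
    exact le_sup_of_le_left (le_pord hγ)
  rcases min_le_iff.1 (padicValRat.min_le_padicValRat_add (p := 2) hγ) with h | h
  · exact le_sup_of_le_left ((WithBot.coe_le_coe.2 (by omega)).trans (le_pord hP))
  · exact le_sup_of_le_right ((WithBot.coe_le_coe.2 (by omega)).trans (le_pord hQ))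

lemma pord_sum_le {ι : Type*} (s : Finset ι) (P : ι → MvPolynomial σ ℚ) :
    pord (∑ k ∈ s, P k) ≤ s.sup fun k => pord (P k) := by
  classical
  induction s using Finset.induction_on with
  | empty => simp [pord_zero]
  | insert k s hk ih =>
    rw [Finset.sum_insert hk, Finset.sup_insert]
    exact (pord_add_le _ _).trans (sup_le_sup_left ih _)

end pord

section substitution

variable {σ : Type*} {R : Type*} [CommSemiring R]

lemma bind₁_monomial_of_forall_eq_X {f : σ → MvPolynomial σ R} {β : σ →₀ ℕ}
    (hf : ∀ j ∈ β.support, f j = X j) (r : R) : bind₁ f (monomial β r) = monomial β r := by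
  rw [bind₁_monomial, monomial_eq, Finsupp.prod]
  exact congrArg _ (Finset.prod_congr rfl fun j hj => by rw [hf j hj])

lemma prod_X_eq_monomial (T : Finset σ) :
    ∏ j ∈ T, (X j : MvPolynomial σ R) = monomial (∑ j ∈ T, Finsupp.single j 1) 1 :=
  (monomial_sum_one T _).symm

lemma monomial_eq_C_mul_X_mul_erase {β : σ →₀ ℕ} {i : σ} (hβi : β i = 1) (r : R) :
    monomial β r = C r * X i * monomial (β.erase i) 1 := by
  conv_lhs => rw [← Finsupp.single_add_erase i β, hβi]
  rw [C_mul_X_eq_monomial, monomial_mul, mul_one]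

variable [DecidableEq σ]

lemma bind₁_liftLin_monomial {α : σ →₀ ℕ} {i : σ} (hαi : α i = 1) (S : Finset σ) (c : ℚ) :
    bind₁ (fun j => if j = i then liftLin S else X j) (monomial α c)
      = ∑ T ∈ S.powerset.erase ∅,
          monomial (∑ j ∈ T, Finsupp.single j 1 + α.erase i) (c * (-2) ^ (T.card - 1)) := by
  rw [monomial_eq_C_mul_X_mul_erase hαi, map_mul, map_mul, bind₁_C_right, bind₁_X_right,
    if_pos rfl, bind₁_monomial_of_forall_eq_X, liftLin, Finset.mul_sum, Finset.sum_mul]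
  · refine Finset.sum_congr rfl fun T _ => ?_
    rw [prod_X_eq_monomial, C_apply, C_apply, monomial_mul, monomial_mul, monomial_mul, zero_add,
      zero_add, mul_one, mul_one]
  · intro j hj
    rw [if_neg (by rintro rfl; simp at hj)]

end substitution

lemma pord_bind₁_liftLin_monomial_le {σ : Type*} [DecidableEq σ] {α : σ →₀ ℕ} {i : σ}
    (hαi : α i = 1) (S : Finset σ) (c : ℚ) :
    pord (bind₁ (fun j => if j = i then liftLin S else X j) (monomial α c))
      ≤ pord (monomial α c) := by
  obtain rfl | hc := eq_or_ne c 0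
  · simp
  rw [bind₁_liftLin_monomial hαi, pord_monomial α hc]
  refine (pord_sum_le _ _).trans (Finset.sup_le fun T hT => ?_)
  have hT : 1 ≤ T.card :=
    Finset.card_pos.2 (Finset.nonempty_iff_ne_empty.2 (Finset.ne_of_mem_erase hT))
  have h2 : ((-2 : ℚ) ^ (T.card - 1)) ≠ 0 := pow_ne_zero _ (by norm_num)
  rw [pord_monomial _ (mul_ne_zero hc h2), padicValRat.mul hc h2, padicValRat_two_neg_two_pow,
    Finsupp.degree_eq_one_add_degree_erase hαi, map_add, map_sum]
  simp only [Finsupp.degree_single, Finset.sum_const, smul_eq_mul, mul_one]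
  exact WithBot.coe_le_coe.2 (by push_cast [hT]; omega)

theorem stmt3_general {σ : Type*} [DecidableEq σ] (α : σ →₀ ℕ) (a : ℤ) (b : ℤ)
    (ha : Odd a) (i : σ) (hαi : α i = 1)
    (S : Finset σ) :
    pord (bind₁ (fun j => if j = i then liftLin S else X j)
        (monomial α ((a : ℚ) * (2 : ℚ) ^ (-b))))
      ≤ ((b + (α.sum fun _ e => (e : ℤ)) - 1 : ℤ) : WithBot ℤ) ∧
    pord (monomial α ((a : ℚ) * (2 : ℚ) ^ (-b)))
      = ((b + (α.sum fun _ e => (e : ℤ)) - 1 : ℤ) : WithBot ℤ) := by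
  have hc : (a : ℚ) * 2 ^ (-b) ≠ 0 := mul_ne_zero ha.intCast_ne_zero (by positivity)
  have hord : pord (monomial α ((a : ℚ) * (2 : ℚ) ^ (-b)))
      = ((b + (α.sum fun _ e => (e : ℤ)) - 1 : ℤ) : WithBot ℤ) := by
    rw [pord_monomial α hc, padicValRat_two_odd_mul_zpow ha, Finsupp.sum_natCast_eq_degree, neg_neg]
  exact ⟨hord ▸ pord_bind₁_liftLin_monomial_le hαi S _, hord⟩

/-- for a single term `(a/2^b)·x^α` with `a` odd and `α_i = 1`,
substituting the lifting of `Q = ∑_{j∈S} x_j` (with `i ∉ S`) for `x_i` yields a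
polynomial of order at most `ord((a/2^b)x^α) = b + |α| - 1`. -/
theorem stmt3 {σ : Type*} [DecidableEq σ] (α : σ →₀ ℕ) (a : ℤ) (b : ℤ)
    (ha : Odd a) (i : σ) (hαi : α i = 1) (hml : ∀ j : σ, α j ≤ 1)
    (S : Finset σ) (hiS : i ∉ S) :
    pord (bind₁ (fun j => if j = i then liftLin S else X j)
        (monomial α ((a : ℚ) * (2 : ℚ) ^ (-b))))
      ≤ ((b + (α.sum fun _ e => (e : ℤ)) - 1 : ℤ) : WithBot ℤ) ∧
    pord (monomial α ((a : ℚ) * (2 : ℚ) ^ (-b)))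
      = ((b + (α.sum fun _ e => (e : ℤ)) - 1 : ℤ) : WithBot ℤ) :=
  stmt3_general α a b ha i hαi S
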